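/- arXiv:1412.6075 — 6 statements merged into one kernel-verified Lean document; each statement's English description precedes it below -/
import Mathlib

section
/- Let G and H be weighted graphs on the same finite nonempty vertex set V, with vol_G(V) > 0. Suppose γ, β ≥ 0 are such that cap_G(S) ≥ γ·min{vol_G(S), vol_G(V∖S)} and cap_G(S) ≥ β·cap_H(S) for every subset S ⊆ V. Then for every vector x : V → ℝ satisfying ∑_{v ∈ V} d_G(v)·x(v) = 0, one has 8·Q_G(x) ≥ γ·β·Q_H(x). (Equivalently, the minimum generalized eigenvalue satisfies λ(L_G, L_H) ≥ φ(G)·φ(G,H)/8.) -/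
open Finset

/-- Cut capacity of `S` in the weighted graph `w`: total weight crossing from `S` to its
complement. -/
def cap {V : Type*} [Fintype V] [DecidableEq V] (w : V → V → ℝ) (S : Finset V) : ℝ :=
  ∑ u ∈ S, ∑ v ∈ Sᶜ, w u v

/-- Degree of a vertex in the weighted graph `w`. -/
def deg {V : Type*} [Fintype V] (w : V → V → ℝ) (v : V) : ℝ :=
  ∑ u, w v u

/-- Volume of a vertex subset. -/
def vol {V : Type*} [Fintype V] (w : V → V → ℝ) (S : Finset V) : ℝ :=
  ∑ v ∈ S, deg w v

/-- Laplacian quadratic form `xᵀ L_w x` of the weighted graph `w`. -/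
noncomputable def quadForm {V : Type*} [Fintype V] (w : V → V → ℝ) (x : V → ℝ) : ℝ :=
  (1 / 2) * ∑ u, ∑ v, w u v * (x u - x v) ^ 2

/-- The demand graph of `G`. -/
noncomputable def demand {V : Type*} [Fintype V] [DecidableEq V] (G : V → V → ℝ) :
    V → V → ℝ :=
  fun u v => if u = v then 0 else deg G u * deg G v / vol G Finset.univ

open MeasureTheory

set_option linter.unusedSectionVars false
set_option linter.unusedVariables false

section helpers
variable {V : Type*} [Fintype V] [DecidableEq V]

lemma ind_integrable (a b c : ℝ) :
    Integrable (fun t => c * (Set.Ico a b).indicator (fun _ => (1:ℝ)) t) := by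
  apply Integrable.const_mul
  rw [integrable_indicator_iff measurableSet_Ico]
  refine integrableOn_const ?_
  rw [Real.volume_Ico]
  exact ENNReal.ofReal_ne_top

lemma ind_integral (a b c : ℝ) :
    ∫ t, c * (Set.Ico a b).indicator (fun _ => (1:ℝ)) t = c * max (b - a) 0 := by
  rw [MeasureTheory.integral_const_mul, integral_indicator_const (1:ℝ) measurableSet_Ico,
    Real.volume_real_Ico, smul_eq_mul, mul_one]

/-- The sweep-cut value as a sum of indicators. -/
lemma cap_sweep_eq (w : V → V → ℝ) (f : V → ℝ) (t : ℝ) :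
    cap w (Finset.univ.filter fun v => t < f v) =
      ∑ u, ∑ v, w u v * (Set.Ico (f v) (f u)).indicator (fun _ => (1:ℝ)) t := by
  unfold cap
  rw [Finset.compl_filter, Finset.sum_filter]
  refine Finset.sum_congr rfl fun u _ => ?_
  rcases lt_or_ge t (f u) with hu | hu
  · rw [if_pos hu, Finset.sum_filter]
    refine Finset.sum_congr rfl fun v _ => ?_
    rcases lt_or_ge t (f v) with hv | hv
    · rw [if_neg (by simpa using hv), Set.indicator_of_notMem (by simp [Set.mem_Ico]; intro h; linarith), mul_zero]
    · rw [if_pos (by simpa using hv), Set.indicator_of_mem (by simp [Set.mem_Ico]; exact ⟨hv, hu⟩), mul_one]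
  · rw [if_neg (by simpa using hu)]
    refine (Finset.sum_eq_zero fun v _ => ?_).symm
    rw [Set.indicator_of_notMem (by simp [Set.mem_Ico]; intro h; linarith), mul_zero]

lemma cap_sweep_integrable (w : V → V → ℝ) (f : V → ℝ) :
    Integrable (fun t => cap w (Finset.univ.filter fun v => t < f v)) := by
  have : (fun t => cap w (Finset.univ.filter fun v => t < f v)) =
      fun t => ∑ u, ∑ v, w u v * (Set.Ico (f v) (f u)).indicator (fun _ => (1:ℝ)) t := by
    funext t; exact cap_sweep_eq w f t
  rw [this]
  exact integrable_finset_sum _ fun u _ => integrable_finset_sum _ fun v _ => ind_integrable _ _ _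

lemma cap_sweep_integral (w : V → V → ℝ) (f : V → ℝ) :
    ∫ t, cap w (Finset.univ.filter fun v => t < f v) =
      ∑ u, ∑ v, w u v * max (f u - f v) 0 := by
  have : (fun t => cap w (Finset.univ.filter fun v => t < f v)) =
      fun t => ∑ u, ∑ v, w u v * (Set.Ico (f v) (f u)).indicator (fun _ => (1:ℝ)) t := by
    funext t; exact cap_sweep_eq w f t
  rw [this, integral_finset_sum _ fun u _ =>
    integrable_finset_sum _ fun v _ => ind_integrable _ _ _]
  refine Finset.sum_congr rfl fun u _ => ?_
  rw [integral_finset_sum _ fun v _ => ind_integrable _ _ _]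
  exact Finset.sum_congr rfl fun v _ => ind_integral _ _ _

lemma vol_sweep_integrable (w : V → V → ℝ) (f : V → ℝ) :
    Integrable (fun t => ∑ v, deg w v * (Set.Ico 0 (f v)).indicator (fun _ => (1:ℝ)) t) :=
  integrable_finset_sum _ fun v _ => ind_integrable _ _ _

lemma vol_sweep_integral (w : V → V → ℝ) (f : V → ℝ) (hf : ∀ v, 0 ≤ f v) :
    ∫ t, ∑ v, deg w v * (Set.Ico 0 (f v)).indicator (fun _ => (1:ℝ)) t =
      ∑ v, deg w v * f v := by
  rw [integral_finset_sum _ fun v _ => ind_integrable _ _ _]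
  refine Finset.sum_congr rfl fun v _ => ?_
  rw [ind_integral, sub_zero, max_eq_left (hf v)]

lemma deg_nonneg (w : V → V → ℝ) (hw : ∀ u v, 0 ≤ w u v) (v : V) : 0 ≤ deg w v :=
  Finset.sum_nonneg fun u _ => hw v u

lemma vol_mono (w : V → V → ℝ) (hw : ∀ u v, 0 ≤ w u v) {S T : Finset V} (h : S ⊆ T) :
    vol w S ≤ vol w T :=
  Finset.sum_le_sum_of_subset_of_nonneg h fun v _ _ => deg_nonneg w hw v

lemma vol_add_compl (w : V → V → ℝ) (S : Finset V) :
    vol w S + vol w Sᶜ = vol w Finset.univ := by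
  unfold vol; rw [Finset.sum_add_sum_compl]

lemma quadForm_nonneg (w : V → V → ℝ) (hw : ∀ u v, 0 ≤ w u v) (x : V → ℝ) :
    0 ≤ quadForm w x := by
  unfold quadForm
  have : 0 ≤ ∑ u, ∑ v, w u v * (x u - x v) ^ 2 :=
    Finset.sum_nonneg fun u _ => Finset.sum_nonneg fun v _ =>
      mul_nonneg (hw u v) (sq_nonneg _)
  linarith
end helpers

section key
variable {V : Type*} [Fintype V] [DecidableEq V]

lemma cap_nonneg (w : V → V → ℝ) (hw : ∀ u v, 0 ≤ w u v) (S : Finset V) : 0 ≤ cap w S :=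
  Finset.sum_nonneg fun u _ => Finset.sum_nonneg fun v _ => hw u v

lemma max_add_max_neg (a : ℝ) : max a 0 + max (-a) 0 = |a| := by
  rcases le_total a 0 with h | h
  · rw [max_eq_right h, max_eq_left (by linarith), abs_of_nonpos h]; ring
  · rw [max_eq_left h, max_eq_right (by linarith), abs_of_nonneg h]; ring

lemma symm_max_sum (w : V → V → ℝ) (hsymm : ∀ u v, w u v = w v u) (f : V → ℝ) :
    2 * (∑ u, ∑ v, w u v * max (f u - f v) 0) = ∑ u, ∑ v, w u v * |f u - f v| := by
  have hswap : (∑ u, ∑ v, w u v * max (f u - f v) 0)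
      = ∑ u, ∑ v, w u v * max (f v - f u) 0 := by
    rw [Finset.sum_comm]
    exact Finset.sum_congr rfl fun u _ => Finset.sum_congr rfl fun v _ => by rw [hsymm u v]
  rw [two_mul]
  nth_rewrite 2 [hswap]
  rw [← Finset.sum_add_distrib]
  refine Finset.sum_congr rfl fun u _ => ?_
  rw [← Finset.sum_add_distrib]
  refine Finset.sum_congr rfl fun v _ => ?_
  rw [← mul_add]
  congr 1
  have := max_add_max_neg (f u - f v)
  rw [neg_sub] at this
  rw [this]

lemma key_lemma (G H : V → V → ℝ)
    (hGsymm : ∀ u v, G u v = G v u) (hGnn : ∀ u v, 0 ≤ G u v)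
    (hHsymm : ∀ u v, H u v = H v u) (hHnn : ∀ u v, 0 ≤ H u v)
    (γ β : ℝ) (hγ : 0 ≤ γ) (hβ : 0 ≤ β)
    (hcond : ∀ S : Finset V, γ * min (vol G S) (vol G Sᶜ) ≤ cap G S)
    (hcapH : ∀ S : Finset V, β * cap H S ≤ cap G S)
    (g : V → ℝ) (hg : ∀ v, 0 ≤ g v)
    (hsupp : 2 * vol G (Finset.univ.filter fun v => 0 < g v) ≤ vol G Finset.univ) :
    γ * β * quadForm H g ≤ 2 * quadForm G g := by
  classical
  set f : V → ℝ := fun v => g v ^ 2 with hf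
  have hfnn : ∀ v, 0 ≤ f v := fun v => sq_nonneg _
  set MG : ℝ := ∑ u, ∑ v, G u v * max (f u - f v) 0 with hMG
  set MH : ℝ := ∑ u, ∑ v, H u v * max (f u - f v) 0 with hMH
  set A : ℝ := ∑ u, ∑ v, G u v * (g u - g v) ^ 2 with hA
  set D : ℝ := ∑ v, deg G v * f v with hD
  have hMGnn : 0 ≤ MG :=
    Finset.sum_nonneg fun u _ => Finset.sum_nonneg fun v _ =>
      mul_nonneg (hGnn u v) (le_max_right _ _)
  have hMHnn : 0 ≤ MH :=
    Finset.sum_nonneg fun u _ => Finset.sum_nonneg fun v _ =>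
      mul_nonneg (hHnn u v) (le_max_right _ _)
  have hAnn : 0 ≤ A :=
    Finset.sum_nonneg fun u _ => Finset.sum_nonneg fun v _ =>
      mul_nonneg (hGnn u v) (sq_nonneg _)
  have hDnn : 0 ≤ D :=
    Finset.sum_nonneg fun v _ => mul_nonneg (deg_nonneg G hGnn v) (hfnn v)
  -- Step (3): γ * D ≤ MG  (co-area + conductance)
  have h3 : γ * D ≤ MG := by
    have hpt : ∀ t : ℝ,
        γ * (∑ v, deg G v * (Set.Ico 0 (f v)).indicator (fun _ => (1:ℝ)) t)
          ≤ cap G (Finset.univ.filter fun v => t < f v) := by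
      intro t
      by_cases ht : 0 ≤ t
      · set S : Finset V := Finset.univ.filter fun v => t < f v with hSdef
        have hsum : (∑ v, deg G v * (Set.Ico 0 (f v)).indicator (fun _ => (1:ℝ)) t)
            = vol G S := by
          rw [hSdef, vol, Finset.sum_filter]
          refine Finset.sum_congr rfl fun v _ => ?_
          rcases lt_or_ge t (f v) with h | h
          · rw [Set.indicator_of_mem (Set.mem_Ico.2 ⟨ht, h⟩), mul_one, if_pos h]
          · rw [Set.indicator_of_notMem (by rw [Set.mem_Ico]; push_neg; intro _; exact h),
              mul_zero, if_neg (not_lt.2 h)]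
        have hSsub : S ⊆ Finset.univ.filter fun v => 0 < g v := by
          intro v hv
          rw [hSdef, Finset.mem_filter] at hv
          rw [Finset.mem_filter]
          refine ⟨Finset.mem_univ v, ?_⟩
          have hfv : 0 < f v := lt_of_le_of_lt ht hv.2
          by_contra hc
          push_neg at hc
          have : g v = 0 := le_antisymm hc (hg v)
          rw [hf] at hfv; simp only [this] at hfv; norm_num at hfv
        have hmin : vol G S ≤ vol G Sᶜ := by
          have h1 := vol_mono G hGnn hSsub
          have h2 := vol_add_compl G S
          linarith
        calc γ * (∑ v, deg G v * (Set.Ico 0 (f v)).indicator (fun _ => (1:ℝ)) t)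
            = γ * min (vol G S) (vol G Sᶜ) := by rw [hsum, min_eq_left hmin]
          _ ≤ cap G S := hcond S
      · have hz : ∀ v, (Set.Ico 0 (f v)).indicator (fun _ => (1:ℝ)) t = 0 := fun v =>
          Set.indicator_of_notMem (by rw [Set.mem_Ico]; push_neg; intro h; exact absurd h ht) _
        simp only [hz, mul_zero, Finset.sum_const_zero]
        exact cap_nonneg G hGnn _
    have hint := MeasureTheory.integral_mono
      ((vol_sweep_integrable G f).const_mul γ) (cap_sweep_integrable G f) hpt
    rwa [MeasureTheory.integral_const_mul, vol_sweep_integral G f hfnn,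
      cap_sweep_integral G f] at hint
  -- Step (4): β * MH ≤ MG  (co-area + generalized conductance)
  have h4 : β * MH ≤ MG := by
    have hpt : ∀ t : ℝ,
        β * cap H (Finset.univ.filter fun v => t < f v)
          ≤ cap G (Finset.univ.filter fun v => t < f v) := fun t => hcapH _
    have hint := MeasureTheory.integral_mono
      ((cap_sweep_integrable H f).const_mul β) (cap_sweep_integrable G f) hpt
    rwa [MeasureTheory.integral_const_mul, cap_sweep_integral H f,
      cap_sweep_integral G f] at hint
  -- Step (2): Cauchy–Schwarz: (2*MG)^2 ≤ 4 * (A * D)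
  have h2 : MG ^ 2 ≤ A * D := by
    have habs : ∀ u v : V, |f u - f v| = |g u - g v| * (g u + g v) := by
      intro u v
      have : f u - f v = (g u - g v) * (g u + g v) := by rw [hf]; ring
      rw [this, abs_mul,
        abs_of_nonneg (show (0:ℝ) ≤ g u + g v from by linarith [hg u, hg v])]
    have hcs := Finset.sum_mul_sq_le_sq_mul_sq Finset.univ
      (fun p : V × V => Real.sqrt (G p.1 p.2) * |g p.1 - g p.2|)
      (fun p : V × V => Real.sqrt (G p.1 p.2) * (g p.1 + g p.2))
    have e1 : (∑ p : V × V, (Real.sqrt (G p.1 p.2) * |g p.1 - g p.2|) *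
        (Real.sqrt (G p.1 p.2) * (g p.1 + g p.2))) = 2 * MG := by
      rw [Fintype.sum_prod_type]
      show (∑ u, ∑ v, (Real.sqrt (G u v) * |g u - g v|) *
          (Real.sqrt (G u v) * (g u + g v))) = 2 * MG
      rw [hMG, symm_max_sum G hGsymm f]
      refine Finset.sum_congr rfl fun u _ => Finset.sum_congr rfl fun v _ => ?_
      rw [habs u v]
      have hq : Real.sqrt (G u v) * Real.sqrt (G u v) = G u v :=
        Real.mul_self_sqrt (hGnn u v)
      linear_combination (|g u - g v| * (g u + g v)) * hq
    have e2 : (∑ p : V × V, (Real.sqrt (G p.1 p.2) * |g p.1 - g p.2|) ^ 2) = A := by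
      rw [Fintype.sum_prod_type]
      show (∑ u, ∑ v, (Real.sqrt (G u v) * |g u - g v|) ^ 2) = A
      rw [hA]
      refine Finset.sum_congr rfl fun u _ => Finset.sum_congr rfl fun v _ => ?_
      rw [mul_pow, Real.sq_sqrt (hGnn u v), sq_abs]
    have e3 : (∑ p : V × V, (Real.sqrt (G p.1 p.2) * (g p.1 + g p.2)) ^ 2) ≤ 4 * D := by
      have step : (∑ p : V × V, (Real.sqrt (G p.1 p.2) * (g p.1 + g p.2)) ^ 2)
          ≤ ∑ p : V × V, G p.1 p.2 * (2 * g p.1 ^ 2 + 2 * g p.2 ^ 2) := by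
        refine Finset.sum_le_sum fun p _ => ?_
        rw [mul_pow, Real.sq_sqrt (hGnn p.1 p.2)]
        have := hGnn p.1 p.2
        nlinarith [sq_nonneg (g p.1 - g p.2)]
      refine le_trans step (le_of_eq ?_)
      rw [Fintype.sum_prod_type]
      show (∑ u, ∑ v, G u v * (2 * g u ^ 2 + 2 * g v ^ 2)) = 4 * D
      have split : (∑ u, ∑ v, G u v * (2 * g u ^ 2 + 2 * g v ^ 2))
          = (∑ u, ∑ v, G u v * (2 * g u ^ 2)) + ∑ u, ∑ v, G u v * (2 * g v ^ 2) := by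
        rw [← Finset.sum_add_distrib]
        refine Finset.sum_congr rfl fun u _ => ?_
        rw [← Finset.sum_add_distrib]
        exact Finset.sum_congr rfl fun v _ => by ring
      rw [split]
      have t1 : (∑ u, ∑ v, G u v * (2 * g u ^ 2)) = 2 * ∑ v, deg G v * f v := by
        rw [Finset.mul_sum]
        refine Finset.sum_congr rfl fun u _ => ?_
        rw [deg, hf, Finset.sum_mul, Finset.mul_sum]
        exact Finset.sum_congr rfl fun v _ => by ring
      have t2 : (∑ u, ∑ v, G u v * (2 * g v ^ 2)) = 2 * ∑ v, deg G v * f v := by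
        rw [Finset.sum_comm, Finset.mul_sum]
        refine Finset.sum_congr rfl fun v _ => ?_
        have hdv : deg G v = ∑ u, G u v := by
          rw [deg]; exact Finset.sum_congr rfl fun u _ => hGsymm v u
        rw [hdv, hf, Finset.sum_mul, Finset.mul_sum]
        exact Finset.sum_congr rfl fun u _ => by ring
      rw [t1, t2, hD]; ring
    have hfin : (2 * MG) ^ 2 ≤ A * (4 * D) := by
      calc (2 * MG) ^ 2 = (∑ p : V × V, (Real.sqrt (G p.1 p.2) * |g p.1 - g p.2|) *
            (Real.sqrt (G p.1 p.2) * (g p.1 + g p.2))) ^ 2 := by rw [e1]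
        _ ≤ (∑ p : V × V, (Real.sqrt (G p.1 p.2) * |g p.1 - g p.2|) ^ 2) *
            ∑ p : V × V, (Real.sqrt (G p.1 p.2) * (g p.1 + g p.2)) ^ 2 := hcs
        _ ≤ A * (4 * D) := by
            rw [e2]
            exact mul_le_mul_of_nonneg_left e3 hAnn
    nlinarith [hfin]
  -- Step (5): 2 * quadForm H g ≤ 2 * MH
  have h5 : quadForm H g ≤ MH := by
    have pt : ∀ u v : V, (g u - g v) ^ 2 ≤ |f u - f v| := by
      intro u v
      have h1 : f u - f v = (g u - g v) * (g u + g v) := by rw [hf]; ring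
      rw [h1, abs_mul,
        abs_of_nonneg (show (0:ℝ) ≤ g u + g v from by linarith [hg u, hg v])]
      have h2 : |g u - g v| ≤ g u + g v :=
        abs_le.2 ⟨by linarith [hg u, hg v], by linarith [hg u, hg v]⟩
      calc (g u - g v) ^ 2 = |g u - g v| * |g u - g v| := by rw [← sq_abs]; ring
        _ ≤ |g u - g v| * (g u + g v) :=
            mul_le_mul_of_nonneg_left h2 (abs_nonneg _)
    have hsum : (∑ u, ∑ v, H u v * (g u - g v) ^ 2) ≤ ∑ u, ∑ v, H u v * |f u - f v| :=
      Finset.sum_le_sum fun u _ => Finset.sum_le_sum fun v _ =>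
        mul_le_mul_of_nonneg_left (pt u v) (hHnn u v)
    rw [← symm_max_sum H hHsymm f] at hsum
    rw [quadForm]; linarith
  -- assemble
  have hγMG : γ * MG ≤ A := by
    rcases eq_or_lt_of_le hMGnn with h0 | h0
    · rw [← h0, mul_zero]; exact hAnn
    · have hstep : γ * MG * MG ≤ A * MG := by
        nlinarith [mul_le_mul_of_nonneg_left h2 hγ, mul_le_mul_of_nonneg_left h3 hAnn]
      exact le_of_mul_le_mul_right hstep h0
  have hAq : A = 2 * quadForm G g := by rw [quadForm, hA]; ring
  rw [mul_assoc]
  calc γ * (β * quadForm H g) ≤ γ * (β * MH) :=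
        mul_le_mul_of_nonneg_left (mul_le_mul_of_nonneg_left h5 hβ) hγ
    _ ≤ γ * MG := mul_le_mul_of_nonneg_left h4 hγ
    _ ≤ A := hγMG
    _ = 2 * quadForm G g := hAq
end key

section mainaux
variable {V : Type*} [Fintype V] [DecidableEq V]

/-- Pointwise inequality for the positive/negative split: the squared differences of the
two parts sum to at most the original squared difference. -/
lemma split_sq_le (a b c : ℝ) :
    (max (a - c) 0 - max (b - c) 0) ^ 2 + (max (c - a) 0 - max (c - b) 0) ^ 2
      ≤ (a - b) ^ 2 := by
  rcases le_total a c with h1 | h1 <;> rcases le_total b c with h2 | h2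
  · rw [max_eq_right (by linarith : a - c ≤ 0), max_eq_right (by linarith : b - c ≤ 0),
      max_eq_left (by linarith : (0:ℝ) ≤ c - a), max_eq_left (by linarith : (0:ℝ) ≤ c - b)]
    nlinarith
  · rw [max_eq_right (by linarith : a - c ≤ 0), max_eq_left (by linarith : (0:ℝ) ≤ b - c),
      max_eq_left (by linarith : (0:ℝ) ≤ c - a), max_eq_right (by linarith : c - b ≤ 0)]
    nlinarith
  · rw [max_eq_left (by linarith : (0:ℝ) ≤ a - c), max_eq_right (by linarith : b - c ≤ 0),
      max_eq_right (by linarith : c - a ≤ 0), max_eq_left (by linarith : (0:ℝ) ≤ c - b)]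
    nlinarith
  · rw [max_eq_left (by linarith : (0:ℝ) ≤ a - c), max_eq_left (by linarith : (0:ℝ) ≤ b - c),
      max_eq_right (by linarith : c - a ≤ 0), max_eq_right (by linarith : c - b ≤ 0)]
    nlinarith

lemma split_sq_ge (a b c : ℝ) :
    (a - b) ^ 2 ≤ 2 * (max (a - c) 0 - max (b - c) 0) ^ 2
      + 2 * (max (c - a) 0 - max (c - b) 0) ^ 2 := by
  have h1 : max (a - c) 0 - max (c - a) 0 = a - c := by
    rcases le_total a c with h | h
    · rw [max_eq_right (by linarith : a - c ≤ 0), max_eq_left (by linarith : (0:ℝ) ≤ c - a)]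
      ring
    · rw [max_eq_left (by linarith : (0:ℝ) ≤ a - c), max_eq_right (by linarith : c - a ≤ 0)]
      ring
  have h2 : max (b - c) 0 - max (c - b) 0 = b - c := by
    rcases le_total b c with h | h
    · rw [max_eq_right (by linarith : b - c ≤ 0), max_eq_left (by linarith : (0:ℝ) ≤ c - b)]
      ring
    · rw [max_eq_left (by linarith : (0:ℝ) ≤ b - c), max_eq_right (by linarith : c - b ≤ 0)]
      ring
  set P : ℝ := max (a - c) 0 - max (b - c) 0 with hP
  set Q : ℝ := max (c - a) 0 - max (c - b) 0 with hQ
  have hpq : P - Q = a - b := by rw [hP, hQ]; linarith [h1, h2]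
  have hsq : (a - b) ^ 2 = (P - Q) ^ 2 := by rw [hpq]
  rw [hsq]
  nlinarith [sq_nonneg (P + Q)]

end mainaux


/-- **Generalized Cheeger inequality** (conductance form):
`xᵀL_G x / xᵀL_H x ≥ φ(G)·φ(G,H)/8` for every `x` with `xᵀd = 0`. -/
theorem generalized_cheeger {V : Type*} [Fintype V] [DecidableEq V] [Nonempty V]
    (G H : V → V → ℝ)
    (hGsymm : ∀ u v, G u v = G v u) (hGnn : ∀ u v, 0 ≤ G u v) (hGdiag : ∀ v, G v v = 0)
    (hHsymm : ∀ u v, H u v = H v u) (hHnn : ∀ u v, 0 ≤ H u v) (hHdiag : ∀ v, H v v = 0)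
    (hvol : 0 < vol G Finset.univ)
    (γ β : ℝ) (hγ : 0 ≤ γ) (hβ : 0 ≤ β)
    (hcond : ∀ S : Finset V, γ * min (vol G S) (vol G Sᶜ) ≤ cap G S)
    (hcapH : ∀ S : Finset V, β * cap H S ≤ cap G S)
    (x : V → ℝ) (hx : ∑ v, deg G v * x v = 0) :
    γ * β * quadForm H x ≤ 8 * quadForm G x := by
  classical
  -- find a weighted median `c` of `x`
  set Vtot : ℝ := vol G Finset.univ with hVtot
  have hA : (Finset.univ.image x).Nonempty := (Finset.univ_nonempty).image x
  set astar : ℝ := (Finset.univ.image x).max' hA with hastar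
  set C : Finset ℝ := (Finset.univ.image x).filter
    (fun a => 2 * vol G (Finset.univ.filter fun v => a < x v) ≤ Vtot) with hC
  have hCne : C.Nonempty := by
    refine ⟨astar, Finset.mem_filter.2 ⟨(Finset.univ.image x).max'_mem hA, ?_⟩⟩
    have : (Finset.univ.filter fun v => astar < x v) = ∅ := by
      refine Finset.filter_eq_empty_iff.2 fun {v} _ => not_lt.2 ?_
      exact Finset.le_max' _ _ (Finset.mem_image_of_mem x (Finset.mem_univ v))
    rw [this]
    simp only [vol, Finset.sum_empty, mul_zero]
    linarith
  set c : ℝ := C.min' hCne with hc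
  have hc1 : 2 * vol G (Finset.univ.filter fun v => c < x v) ≤ Vtot :=
    (Finset.mem_filter.1 (C.min'_mem hCne)).2
  have hc2 : 2 * vol G (Finset.univ.filter fun v => x v < c) ≤ Vtot := by
    set B : Finset V := Finset.univ.filter fun v => x v < c with hB
    rcases B.eq_empty_or_nonempty with hBe | hBne
    · rw [hBe]
      simp only [vol, Finset.sum_empty, mul_zero]
      linarith
    · have hBimne : (B.image x).Nonempty := hBne.image x
      set b : ℝ := (B.image x).max' hBimne with hb
      obtain ⟨v', hv'B, hv'⟩ := Finset.mem_image.1 ((B.image x).max'_mem hBimne)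
      have hbc : b < c := by
        rw [hb, ← hv']
        exact (Finset.mem_filter.1 hv'B).2
      have hbA : b ∈ Finset.univ.image x := by
        rw [hb, ← hv']; exact Finset.mem_image_of_mem x (Finset.mem_univ v')
      have hbnC : b ∉ C := fun hmem => absurd (C.min'_le b hmem) (not_le.2 hbc)
      have hbig : Vtot < 2 * vol G (Finset.univ.filter fun v => b < x v) := by
        by_contra hcon
        push_neg at hcon
        exact hbnC (Finset.mem_filter.2 ⟨hbA, hcon⟩)
      have hsub : (Finset.univ.filter fun v => b < x v) ⊆ Bᶜ := by
        intro u hu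
        rw [Finset.mem_compl]
        intro huB
        have h1 : x u ≤ b := by
          rw [hb]; exact Finset.le_max' _ _ (Finset.mem_image_of_mem x huB)
        have h2 : b < x u := (Finset.mem_filter.1 hu).2
        linarith
      have hm := vol_mono G hGnn hsub
      have hsplit := vol_add_compl G B
      linarith
  -- split x into positive and negative parts around c
  set gp : V → ℝ := fun v => max (x v - c) 0 with hgp
  set gm : V → ℝ := fun v => max (c - x v) 0 with hgm
  have hgpnn : ∀ v, 0 ≤ gp v := fun v => le_max_right _ _
  have hgmnn : ∀ v, 0 ≤ gm v := fun v => le_max_right _ _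
  have hgpsupp : 2 * vol G (Finset.univ.filter fun v => 0 < gp v) ≤ Vtot := by
    have hsub : (Finset.univ.filter fun v => 0 < gp v)
        ⊆ Finset.univ.filter fun v => c < x v := by
      intro v hv
      have h1 := (Finset.mem_filter.1 hv).2
      rw [hgp] at h1
      rcases lt_max_iff.1 h1 with h | h
      · exact Finset.mem_filter.2 ⟨Finset.mem_univ v, by linarith⟩
      · exact absurd h (lt_irrefl 0)
    have := vol_mono G hGnn hsub
    linarith
  have hgmsupp : 2 * vol G (Finset.univ.filter fun v => 0 < gm v) ≤ Vtot := by
    have hsub : (Finset.univ.filter fun v => 0 < gm v)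
        ⊆ Finset.univ.filter fun v => x v < c := by
      intro v hv
      have h1 := (Finset.mem_filter.1 hv).2
      rw [hgm] at h1
      rcases lt_max_iff.1 h1 with h | h
      · exact Finset.mem_filter.2 ⟨Finset.mem_univ v, by linarith⟩
      · exact absurd h (lt_irrefl 0)
    have := vol_mono G hGnn hsub
    linarith
  have k1 := key_lemma G H hGsymm hGnn hHsymm hHnn γ β hγ hβ hcond hcapH gp hgpnn hgpsupp
  have k2 := key_lemma G H hGsymm hGnn hHsymm hHnn γ β hγ hβ hcond hcapH gm hgmnn hgmsupp
  -- comparison of quadratic forms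
  have hQG : quadForm G gp + quadForm G gm ≤ quadForm G x := by
    unfold quadForm
    rw [← mul_add]
    have : (∑ u, ∑ v, G u v * (gp u - gp v) ^ 2) + (∑ u, ∑ v, G u v * (gm u - gm v) ^ 2)
        ≤ ∑ u, ∑ v, G u v * (x u - x v) ^ 2 := by
      rw [← Finset.sum_add_distrib]
      refine Finset.sum_le_sum fun u _ => ?_
      rw [← Finset.sum_add_distrib]
      refine Finset.sum_le_sum fun v _ => ?_
      rw [← mul_add]
      exact mul_le_mul_of_nonneg_left (split_sq_le (x u) (x v) c) (hGnn u v)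
    linarith
  have hQH : quadForm H x ≤ 2 * quadForm H gp + 2 * quadForm H gm := by
    unfold quadForm
    have : (∑ u, ∑ v, H u v * (x u - x v) ^ 2)
        ≤ ∑ u, ∑ v, (2 * (H u v * (gp u - gp v) ^ 2) + 2 * (H u v * (gm u - gm v) ^ 2)) := by
      refine Finset.sum_le_sum fun u _ => ?_
      refine Finset.sum_le_sum fun v _ => ?_
      have := split_sq_ge (x u) (x v) c
      nlinarith [hHnn u v, this]
    have hsplit : (∑ u, ∑ v, (2 * (H u v * (gp u - gp v) ^ 2) + 2 * (H u v * (gm u - gm v) ^ 2)))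
        = 2 * (∑ u, ∑ v, H u v * (gp u - gp v) ^ 2)
          + 2 * (∑ u, ∑ v, H u v * (gm u - gm v) ^ 2) := by
      rw [Finset.mul_sum, Finset.mul_sum, ← Finset.sum_add_distrib]
      refine Finset.sum_congr rfl fun u _ => ?_
      rw [Finset.mul_sum, Finset.mul_sum, ← Finset.sum_add_distrib]
    rw [hsplit] at this
    linarith
  have hQGnn : 0 ≤ quadForm G x := quadForm_nonneg G hGnn x
  have hmul := mul_le_mul_of_nonneg_left hQH (mul_nonneg hγ hβ)
  nlinarith [k1, k2, hQG, hQH, hQGnn, hmul]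
end

section
/- Let G and H be weighted graphs on the same finite nonempty vertex set V, let x : V → ℝ, and partition V into V⁻ = {u : x(u) ≤ 0} and V⁺ = {u : x(u) > 0}. For a weighted graph w define N_w(x) := (1/2)·∑_{u,v in the same part} w u v·|x(u)² − x(v)²| + ∑_{u ∈ V⁻, v ∈ V⁺} w u v·(x(u)² + x(v)²). If β ≥ 0 is such that cap_G(S) ≥ β·cap_H(S) for every S ⊆ V, then 2·N_G(x) ≥ β·Q_H(x). (That is, [∑_{uv ∈ E_G^{same}} w_G(u,v)|x_u² − x_v²| + ∑_{uv ∈ E_G^{dif}} w_G(u,v)(x_u² + x_v²)] / (x^T L_H x) ≥ φ(G,H)/2.) -/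
open Finset

/-- The numerator quantity `N_w(x)`: same-part pairs weighted by `|x_u² − x_v²|`
(each unordered pair once) plus crossing pairs weighted by `x_u² + x_v²`,
with parts `V⁻ = {u : x u ≤ 0}` and `V⁺ = {u : 0 < x u}`. -/
noncomputable def sweepNum {V : Type*} [Fintype V] (w : V → V → ℝ) (x : V → ℝ) : ℝ :=
  (1 / 2) * (∑ u ∈ Finset.univ.filter (fun u => x u ≤ 0),
      ∑ v ∈ Finset.univ.filter (fun v => x v ≤ 0), w u v * |x u ^ 2 - x v ^ 2|
    + ∑ u ∈ Finset.univ.filter (fun u => 0 < x u),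
      ∑ v ∈ Finset.univ.filter (fun v => 0 < x v), w u v * |x u ^ 2 - x v ^ 2|)
  + ∑ u ∈ Finset.univ.filter (fun u => x u ≤ 0),
      ∑ v ∈ Finset.univ.filter (fun v => 0 < x v), w u v * (x u ^ 2 + x v ^ 2)

section AuxLemmas

open MeasureTheory

variable {V : Type*} [Fintype V] [DecidableEq V]

/-- Pointwise comparison of `(a-b)²` with twice the gap of signed squares. -/
lemma key_ptwise (a b : ℝ) :
    (a - b) ^ 2 ≤ 2 * |(if 0 < a then a ^ 2 else -(a ^ 2)) - (if 0 < b then b ^ 2 else -(b ^ 2))| := by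
  by_cases ha : 0 < a <;> by_cases hb : 0 < b <;> simp only [ha, hb, if_true, if_false]
  · have h1 := le_abs_self (a ^ 2 - b ^ 2)
    have h2 := neg_abs_le (a ^ 2 - b ^ 2)
    rcases le_total a b with h | h
    · nlinarith
    · nlinarith
  · have h1 := le_abs_self (a ^ 2 - -(b ^ 2))
    push_neg at hb
    nlinarith [sq_nonneg (a + b)]
  · have h1 := le_abs_self (-(a ^ 2) - b ^ 2)
    have h2 := neg_abs_le (-(a ^ 2) - b ^ 2)
    push_neg at ha
    nlinarith [sq_nonneg (a + b)]
  · have h1 := le_abs_self (-(a ^ 2) - -(b ^ 2))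
    have h2 := neg_abs_le (-(a ^ 2) - -(b ^ 2))
    push_neg at ha hb
    rcases le_total a b with h | h
    · nlinarith
    · nlinarith

/-- Coarea identity at a level `t`: the weighted count of pairs separated by the
threshold `t` equals twice the cut capacity of the sweep set at level `t`. -/
lemma coarea (w : V → V → ℝ) (hsymm : ∀ u v, w u v = w v u) (z : V → ℝ) (t : ℝ) :
    ∑ u, ∑ v, w u v * Set.indicator (Set.Ico (min (z u) (z v)) (max (z u) (z v))) 1 t
      = 2 * cap w (Finset.univ.filter fun u => t < z u) := by
  classical
  have hcap : cap w (Finset.univ.filter fun u => t < z u)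
      = ∑ u, ∑ v, if t < z u ∧ ¬ t < z v then w u v else 0 := by
    unfold cap
    rw [Finset.compl_filter, Finset.sum_filter]
    refine Finset.sum_congr rfl fun u _ => ?_
    rw [Finset.sum_filter]
    by_cases hu : t < z u <;> simp [hu]
  have hcap2 : cap w (Finset.univ.filter fun u => t < z u)
      = ∑ u, ∑ v, if ¬ t < z u ∧ t < z v then w u v else 0 := by
    rw [hcap, Finset.sum_comm]
    refine Finset.sum_congr rfl fun u _ => Finset.sum_congr rfl fun v _ => ?_
    rw [hsymm u v]
    by_cases h1 : t < z u <;> by_cases h2 : t < z v <;> simp [h1, h2]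
  have hmain : ∑ u, ∑ v, w u v * Set.indicator (Set.Ico (min (z u) (z v)) (max (z u) (z v))) 1 t
      = (∑ u, ∑ v, if t < z u ∧ ¬ t < z v then w u v else 0)
        + ∑ u, ∑ v, if ¬ t < z u ∧ t < z v then w u v else 0 := by
    rw [← Finset.sum_add_distrib]
    refine Finset.sum_congr rfl fun u _ => ?_
    rw [← Finset.sum_add_distrib]
    refine Finset.sum_congr rfl fun v _ => ?_
    by_cases h1 : t < z u <;> by_cases h2 : t < z v
    · have hnot : t ∉ Set.Ico (min (z u) (z v)) (max (z u) (z v)) := by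
        simp only [Set.mem_Ico, not_and_or, not_le]
        exact Or.inl (lt_min h1 h2)
      rw [Set.indicator_of_notMem hnot]
      simp [h1, h2]
    · have hmem : t ∈ Set.Ico (min (z u) (z v)) (max (z u) (z v)) :=
        ⟨le_trans (min_le_right _ _) (not_lt.1 h2), lt_of_lt_of_le h1 (le_max_left _ _)⟩
      rw [Set.indicator_of_mem hmem]
      simp [h1, h2]
    · have hmem : t ∈ Set.Ico (min (z u) (z v)) (max (z u) (z v)) :=
        ⟨le_trans (min_le_left _ _) (not_lt.1 h1), lt_of_lt_of_le h2 (le_max_right _ _)⟩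
      rw [Set.indicator_of_mem hmem]
      simp [h1, h2]
    · have hnot : t ∉ Set.Ico (min (z u) (z v)) (max (z u) (z v)) := by
        simp only [Set.mem_Ico, not_and_or, not_lt]
        exact Or.inr (max_le (not_lt.1 h1) (not_lt.1 h2))
      rw [Set.indicator_of_notMem hnot]
      simp [h1, h2]
  rw [hmain, ← hcap, ← hcap2]; ring

lemma integrable_piece (a b : ℝ) (c : ℝ) :
    Integrable (fun t => c * Set.indicator (Set.Ico a b) (1 : ℝ → ℝ) t) := by
  refine Integrable.const_mul ?_ c
  rw [integrable_indicator_iff measurableSet_Ico]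
  refine integrableOn_const (hs := ?_)
  simp [Real.volume_Ico]

lemma integral_piece (a b : ℝ) (c : ℝ) :
    ∫ t, c * Set.indicator (Set.Ico (min a b) (max a b)) (1 : ℝ → ℝ) t = c * |a - b| := by
  rw [MeasureTheory.integral_const_mul, MeasureTheory.integral_indicator_one measurableSet_Ico,
    MeasureTheory.measureReal_def, Real.volume_Ico, ENNReal.toReal_ofReal (by simp [min_le_max] : (0:ℝ) ≤ max a b - min a b)]
  rw [max_sub_min_eq_abs, abs_sub_comm]

/-- Coarea comparison: sums of `w·|z u - z v|` compare via cut capacities. -/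
lemma coarea_compare (G H : V → V → ℝ)
    (hGsymm : ∀ u v, G u v = G v u) (hHsymm : ∀ u v, H u v = H v u)
    (z : V → ℝ) (β : ℝ)
    (hcap : ∀ S : Finset V, β * cap H S ≤ cap G S) :
    β * ∑ u, ∑ v, H u v * |z u - z v| ≤ ∑ u, ∑ v, G u v * |z u - z v| := by
  classical
  have key : ∀ (w : V → V → ℝ),
      ∫ t, ∑ u, ∑ v, w u v * Set.indicator (Set.Ico (min (z u) (z v)) (max (z u) (z v))) 1 t
        = ∑ u, ∑ v, w u v * |z u - z v| := by
    intro w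
    rw [MeasureTheory.integral_finset_sum _ (fun u _ => integrable_finset_sum _
      (fun v _ => integrable_piece _ _ _))]
    refine Finset.sum_congr rfl fun u _ => ?_
    rw [MeasureTheory.integral_finset_sum _ (fun v _ => integrable_piece _ _ _)]
    exact Finset.sum_congr rfl fun v _ => integral_piece _ _ _
  rw [← key G, ← key H, ← MeasureTheory.integral_const_mul]
  refine MeasureTheory.integral_mono ?_ ?_ ?_
  · exact (integrable_finset_sum _ (fun u _ => integrable_finset_sum _
      (fun v _ => integrable_piece _ _ _))).const_mul β
  · exact integrable_finset_sum _ (fun u _ => integrable_finset_sum _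
      (fun v _ => integrable_piece _ _ _))
  · intro t
    simp only
    rw [coarea G hGsymm z t, coarea H hHsymm z t]
    calc β * (2 * cap H (Finset.univ.filter fun u => t < z u))
        = 2 * (β * cap H (Finset.univ.filter fun u => t < z u)) := by ring
      _ ≤ 2 * cap G (Finset.univ.filter fun u => t < z u) := by
          linarith [hcap (Finset.univ.filter fun u => t < z u)]

/-- The full ordered double sum of `G u v * |z u - z v|` (with `z` the signed square of `x`)
equals `2 * sweepNum G x`. -/
lemma sum_abs_eq_sweepNum (G : V → V → ℝ) (hGsymm : ∀ u v, G u v = G v u) (x : V → ℝ) :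
    ∑ u, ∑ v, G u v *
        |(if 0 < x u then x u ^ 2 else -(x u ^ 2)) - (if 0 < x v then x v ^ 2 else -(x v ^ 2))|
      = 2 * sweepNum G x := by
  classical
  set z : V → ℝ := fun u => if 0 < x u then x u ^ 2 else -(x u ^ 2) with hz
  set Pf : Finset V := Finset.univ.filter (fun u => 0 < x u) with hPf
  set Nf : Finset V := Finset.univ.filter (fun u => ¬ 0 < x u) with hNf
  have hmemP : ∀ u ∈ Pf, 0 < x u := fun u hu => (Finset.mem_filter.1 hu).2
  have hmemN : ∀ u ∈ Nf, ¬ 0 < x u := fun u hu => (Finset.mem_filter.1 hu).2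
  have hfilter : Finset.univ.filter (fun u : V => x u ≤ 0) = Nf := by
    simp [hNf, not_lt]
  set F : V → V → ℝ := fun u v => G u v * |z u - z v| with hF
  have expand : ∑ u, ∑ v, F u v =
      (∑ u ∈ Pf, ∑ v ∈ Pf, F u v + ∑ u ∈ Pf, ∑ v ∈ Nf, F u v)
        + (∑ u ∈ Nf, ∑ v ∈ Pf, F u v + ∑ u ∈ Nf, ∑ v ∈ Nf, F u v) := by
    rw [← Finset.sum_filter_add_sum_filter_not Finset.univ (fun u => 0 < x u)
      (fun u => ∑ v, F u v)]
    congr 1 <;>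
      · rw [← Finset.sum_add_distrib]
        exact Finset.sum_congr rfl fun u _ =>
          (Finset.sum_filter_add_sum_filter_not Finset.univ (fun v => 0 < x v) (F u)).symm
  have hPP : ∑ u ∈ Pf, ∑ v ∈ Pf, F u v
      = ∑ u ∈ Pf, ∑ v ∈ Pf, G u v * |x u ^ 2 - x v ^ 2| := by
    refine Finset.sum_congr rfl fun u hu => Finset.sum_congr rfl fun v hv => ?_
    simp only [hF, hz, if_pos (hmemP u hu), if_pos (hmemP v hv)]
  have hNN : ∑ u ∈ Nf, ∑ v ∈ Nf, F u v
      = ∑ u ∈ Nf, ∑ v ∈ Nf, G u v * |x u ^ 2 - x v ^ 2| := by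
    refine Finset.sum_congr rfl fun u hu => Finset.sum_congr rfl fun v hv => ?_
    simp only [hF, hz, if_neg (hmemN u hu), if_neg (hmemN v hv)]
    rw [show -(x u ^ 2) - -(x v ^ 2) = -(x u ^ 2 - x v ^ 2) by ring, abs_neg]
  have hNP : ∑ u ∈ Nf, ∑ v ∈ Pf, F u v
      = ∑ u ∈ Nf, ∑ v ∈ Pf, G u v * (x u ^ 2 + x v ^ 2) := by
    refine Finset.sum_congr rfl fun u hu => Finset.sum_congr rfl fun v hv => ?_
    simp only [hF, hz, if_neg (hmemN u hu), if_pos (hmemP v hv)]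
    rw [abs_of_nonpos (by nlinarith [sq_nonneg (x u), sq_nonneg (x v)])]
    ring
  have hswap : ∑ u ∈ Pf, ∑ v ∈ Nf, F u v = ∑ u ∈ Nf, ∑ v ∈ Pf, F u v := by
    rw [Finset.sum_comm]
    refine Finset.sum_congr rfl fun u _ => Finset.sum_congr rfl fun v _ => ?_
    simp only [hF]
    rw [hGsymm, abs_sub_comm]
  rw [show (∑ u, ∑ v, G u v *
        |(if 0 < x u then x u ^ 2 else -(x u ^ 2)) - (if 0 < x v then x v ^ 2 else -(x v ^ 2))|)
      = ∑ u, ∑ v, F u v from rfl]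
  rw [expand, hswap, hPP, hNN, hNP]
  unfold sweepNum
  rw [hfilter]
  ring

end AuxLemmas

/-- Lemma 4 of the paper: `N_G(x) / (xᵀ L_H x) ≥ φ(G,H) / 2`. -/
theorem sweepNum_ge_quadForm {V : Type*} [Fintype V] [DecidableEq V] [Nonempty V]
    (G H : V → V → ℝ)
    (hGsymm : ∀ u v, G u v = G v u) (hGnn : ∀ u v, 0 ≤ G u v) (hGdiag : ∀ v, G v v = 0)
    (hHsymm : ∀ u v, H u v = H v u) (hHnn : ∀ u v, 0 ≤ H u v) (hHdiag : ∀ v, H v v = 0)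
    (x : V → ℝ)
    (β : ℝ) (hβ : 0 ≤ β) (hcap : ∀ S : Finset V, β * cap H S ≤ cap G S) :
    β * quadForm H x ≤ 2 * sweepNum G x := by
  classical
  set z : V → ℝ := fun u => if 0 < x u then x u ^ 2 else -(x u ^ 2) with hz
  have step1 : quadForm H x ≤ ∑ u, ∑ v, H u v * |z u - z v| := by
    have h2 : ∑ u, ∑ v, H u v * (x u - x v) ^ 2
        ≤ 2 * ∑ u, ∑ v, H u v * |z u - z v| := by
      rw [Finset.mul_sum]
      refine Finset.sum_le_sum fun u _ => ?_
      rw [Finset.mul_sum]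
      refine Finset.sum_le_sum fun v _ => ?_
      calc H u v * (x u - x v) ^ 2
          ≤ H u v * (2 * |z u - z v|) :=
            mul_le_mul_of_nonneg_left (key_ptwise (x u) (x v)) (hHnn u v)
        _ = 2 * (H u v * |z u - z v|) := by ring
    unfold quadForm
    linarith
  have step2 : β * ∑ u, ∑ v, H u v * |z u - z v| ≤ ∑ u, ∑ v, G u v * |z u - z v| :=
    coarea_compare G H hGsymm hHsymm z β hcap
  have step3 : ∑ u, ∑ v, G u v * |z u - z v| = 2 * sweepNum G x :=
    sum_abs_eq_sweepNum G hGsymm x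
  calc β * quadForm H x ≤ β * ∑ u, ∑ v, H u v * |z u - z v| :=
        mul_le_mul_of_nonneg_left step1 hβ
    _ ≤ ∑ u, ∑ v, G u v * |z u - z v| := step2
    _ = 2 * sweepNum G x := step3
end

section
/- Let H be a weighted graph on a finite nonempty vertex set V, let x : V → ℝ, and partition V into V⁻ = {u : x(u) ≤ 0} and V⁺ = {u : x(u) > 0}. Then Q_H(x) ≤ 2·[(1/2)·∑_{u,v in the same part} w_H(u,v)·|x(u)² − x(v)²| + ∑_{u ∈ V⁻, v ∈ V⁺} w_H(u,v)·(x(u)² + x(v)²)]. -/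
open Finset

/-- `xᵀ L_H x` is at most twice the quantity with same-part pairs weighted by `|x_u² − x_v²|`
and crossing pairs weighted by `x_u² + x_v²`. -/
theorem quadForm_le_two_sweepNum {V : Type*} [Fintype V] [Nonempty V]
    (H : V → V → ℝ)
    (hsymm : ∀ u v, H u v = H v u) (hnn : ∀ u v, 0 ≤ H u v) (hdiag : ∀ v, H v v = 0)
    (x : V → ℝ) :
    quadForm H x ≤
      2 * ((1 / 2) * (∑ u ∈ Finset.univ.filter (fun u => x u ≤ 0),
            ∑ v ∈ Finset.univ.filter (fun v => x v ≤ 0), H u v * |x u ^ 2 - x v ^ 2|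
          + ∑ u ∈ Finset.univ.filter (fun u => 0 < x u),
            ∑ v ∈ Finset.univ.filter (fun v => 0 < x v), H u v * |x u ^ 2 - x v ^ 2|)
        + ∑ u ∈ Finset.univ.filter (fun u => x u ≤ 0),
            ∑ v ∈ Finset.univ.filter (fun v => 0 < x v), H u v * (x u ^ 2 + x v ^ 2)) := by
  classical
  set N := Finset.univ.filter (fun u => x u ≤ 0) with hN
  set P := Finset.univ.filter (fun u => 0 < x u) with hP
  have hsplit : ∀ f : V → V → ℝ, (∑ u, ∑ v, f u v)
      = (∑ u ∈ N, ∑ v ∈ N, f u v) + (∑ u ∈ N, ∑ v ∈ P, f u v)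
        + ((∑ u ∈ P, ∑ v ∈ N, f u v) + ∑ u ∈ P, ∑ v ∈ P, f u v) := by
    intro f
    have h1 : ∀ u : V, (∑ v, f u v) = (∑ v ∈ N, f u v) + ∑ v ∈ P, f u v := by
      intro u
      rw [← Finset.sum_filter_add_sum_filter_not Finset.univ (fun v => x v ≤ 0)]
      simp only [not_le, hN, hP]
    calc (∑ u, ∑ v, f u v)
        = (∑ u ∈ N, ∑ v, f u v) + ∑ u ∈ P, ∑ v, f u v := by
          rw [← Finset.sum_filter_add_sum_filter_not Finset.univ (fun u => x u ≤ 0)]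
          simp only [not_le, hN, hP]
      _ = _ := by
          simp only [h1, Finset.sum_add_distrib]
  have hPN : (∑ u ∈ P, ∑ v ∈ N, H u v * (x u - x v) ^ 2)
      = ∑ u ∈ N, ∑ v ∈ P, H u v * (x u - x v) ^ 2 := by
    rw [Finset.sum_comm]
    refine Finset.sum_congr rfl fun u _ => Finset.sum_congr rfl fun v _ => ?_
    rw [hsymm]; ring
  have hQ : quadForm H x
      = (1/2) * (∑ u ∈ N, ∑ v ∈ N, H u v * (x u - x v) ^ 2)
        + (1/2) * (∑ u ∈ P, ∑ v ∈ P, H u v * (x u - x v) ^ 2)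
        + ∑ u ∈ N, ∑ v ∈ P, H u v * (x u - x v) ^ 2 := by
    rw [quadForm, hsplit (fun u v => H u v * (x u - x v) ^ 2)]
    rw [hPN]; ring
  have hA : (∑ u ∈ N, ∑ v ∈ N, H u v * (x u - x v) ^ 2)
      ≤ ∑ u ∈ N, ∑ v ∈ N, H u v * |x u ^ 2 - x v ^ 2| := by
    refine Finset.sum_le_sum fun u hu => Finset.sum_le_sum fun v hv => ?_
    have hu' : x u ≤ 0 := (Finset.mem_filter.mp hu).2
    have hv' : x v ≤ 0 := (Finset.mem_filter.mp hv).2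
    refine mul_le_mul_of_nonneg_left ?_ (hnn u v)
    rcases abs_cases (x u ^ 2 - x v ^ 2) with ⟨h, h'⟩ | ⟨h, h'⟩ <;> rw [h] <;>
      nlinarith [mul_nonneg (neg_nonneg.mpr hu') (neg_nonneg.mpr hv')]
  have hD : (∑ u ∈ P, ∑ v ∈ P, H u v * (x u - x v) ^ 2)
      ≤ ∑ u ∈ P, ∑ v ∈ P, H u v * |x u ^ 2 - x v ^ 2| := by
    refine Finset.sum_le_sum fun u hu => Finset.sum_le_sum fun v hv => ?_
    have hu' : 0 < x u := (Finset.mem_filter.mp hu).2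
    have hv' : 0 < x v := (Finset.mem_filter.mp hv).2
    refine mul_le_mul_of_nonneg_left ?_ (hnn u v)
    rcases abs_cases (x u ^ 2 - x v ^ 2) with ⟨h, h'⟩ | ⟨h, h'⟩ <;> rw [h] <;>
      nlinarith [mul_pos hu' hv']
  have hC : (∑ u ∈ N, ∑ v ∈ P, H u v * (x u - x v) ^ 2)
      ≤ 2 * ∑ u ∈ N, ∑ v ∈ P, H u v * (x u ^ 2 + x v ^ 2) := by
    rw [Finset.mul_sum]
    refine Finset.sum_le_sum fun u hu => ?_
    rw [Finset.mul_sum]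
    refine Finset.sum_le_sum fun v hv => ?_
    have : H u v * (x u - x v) ^ 2 ≤ H u v * (2 * (x u ^ 2 + x v ^ 2)) := by
      refine mul_le_mul_of_nonneg_left ?_ (hnn u v)
      nlinarith [sq_nonneg (x u + x v)]
    linarith
  have hAnn : (0:ℝ) ≤ ∑ u ∈ N, ∑ v ∈ N, H u v * |x u ^ 2 - x v ^ 2| :=
    Finset.sum_nonneg fun u _ => Finset.sum_nonneg fun v _ =>
      mul_nonneg (hnn u v) (abs_nonneg _)
  have hDnn : (0:ℝ) ≤ ∑ u ∈ P, ∑ v ∈ P, H u v * |x u ^ 2 - x v ^ 2| :=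
    Finset.sum_nonneg fun u _ => Finset.sum_nonneg fun v _ =>
      mul_nonneg (hnn u v) (abs_nonneg _)
  rw [hQ]
  linarith
end

section
/- Let G and H be weighted graphs on the same finite nonempty vertex set V, let x : V → ℝ, and let V⁻ = {u : x(u) ≤ 0}, V⁺ = {u : x(u) > 0}. Suppose β ≥ 0 is such that cap_G(S) ≥ β·cap_H(S) for every S ⊆ V. Then (1/2)·∑_{u,v ∈ V⁻} w_G(u,v)·|x(u)² − x(v)²| + ∑_{u ∈ V⁻, v ∈ V⁺} w_G(u,v)·x(u)² ≥ β·[(1/2)·∑_{u,v ∈ V⁻} w_H(u,v)·|x(u)² − x(v)²| + ∑_{u ∈ V⁻, v ∈ V⁺} w_H(u,v)·x(u)²]. -/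
open Finset

noncomputable def Phi {V : Type*} [Fintype V] [DecidableEq V] (w : V → V → ℝ)
    (A : Finset V) (y : V → ℝ) : ℝ :=
  ∑ u ∈ A, ∑ v, w u v * (if v ∈ A then max (y u - y v) 0 else y u)

lemma phi_step {V : Type*} [Fintype V] [DecidableEq V] (w : V → V → ℝ)
    (A : Finset V) (y : V → ℝ) (m : ℝ)
    (hy : ∀ u, 0 ≤ y u)
    (hm : ∀ u ∈ A, 0 < y u → m ≤ y u) :
    Phi w A y = m * cap w (A.filter (fun u => 0 < y u))
      + Phi w A (fun u => if u ∈ A ∧ 0 < y u then y u - m else y u) := by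
  set S := A.filter (fun u => 0 < y u) with hS
  have hScompl : Sᶜ = univ.filter (fun v => v ∉ S) := by ext v; simp
  have hcap : cap w S = ∑ u ∈ A, ∑ v, (if u ∈ S ∧ v ∉ S then w u v else 0) := by
    rw [cap, hScompl]
    rw [hS, Finset.sum_filter]
    refine sum_congr rfl fun u hu => ?_
    have huS : u ∈ S ↔ 0 < y u := by simp [hS, hu]
    rw [Finset.sum_filter]
    split_ifs with h
    · exact sum_congr rfl fun v _ => by simp [huS.mpr h, hu, h]
    · symm; apply Finset.sum_eq_zero; intro v _
      rw [if_neg]; rintro ⟨huS2, -⟩; exact h (huS.mp huS2)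
  rw [hcap, Phi, Phi, Finset.mul_sum]
  rw [← Finset.sum_add_distrib]
  refine sum_congr rfl fun u hu => ?_
  rw [Finset.mul_sum, ← Finset.sum_add_distrib]
  refine sum_congr rfl fun v _ => ?_
  have huS : u ∈ S ↔ 0 < y u := by simp [hS, hu]
  by_cases hvA : v ∈ A
  · rw [if_pos hvA, if_pos hvA]
    by_cases hyu : 0 < y u
    · have hmu : m ≤ y u := hm u hu hyu
      rw [if_pos (And.intro hu hyu)]
      by_cases hyv : 0 < y v
      · have hmv : m ≤ y v := hm v hvA hyv
        rw [if_pos (And.intro hvA hyv),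
          if_neg (fun h => h.2 (mem_filter.mpr ⟨hvA, hyv⟩ : v ∈ S))]
        have : y u - m - (y v - m) = y u - y v := by ring
        rw [this]; ring
      · have hyv0 : y v = 0 := le_antisymm (not_lt.mp hyv) (hy v)
        have hvS' : v ∉ S := fun h => hyv (by simpa [hS, hvA] using h)
        rw [if_neg (fun h : v ∈ A ∧ 0 < y v => hyv h.2),
          if_pos (And.intro (huS.mpr hyu) hvS')]
        rw [max_eq_left (by linarith), max_eq_left (by linarith)]
        ring
    · have hyu0 : y u = 0 := le_antisymm (not_lt.mp hyu) (hy u)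
      have huS' : u ∉ S := fun h => hyu (huS.mp h)
      rw [if_neg (fun h : u ∈ A ∧ 0 < y u => hyu h.2),
        if_neg (fun h : u ∈ S ∧ v ∉ S => huS' h.1)]
      by_cases hyv : 0 < y v
      · have hmv : m ≤ y v := hm v hvA hyv
        rw [if_pos (And.intro hvA hyv)]
        rw [max_eq_right (by linarith), max_eq_right (by linarith)]
        ring
      · rw [if_neg (fun h : v ∈ A ∧ 0 < y v => hyv h.2)]
        ring
  · rw [if_neg hvA, if_neg hvA]
    have hvS' : v ∉ S := fun h => hvA (mem_filter.mp h).1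
    by_cases hyu : 0 < y u
    · rw [if_pos (And.intro hu hyu), if_pos (And.intro (huS.mpr hyu) hvS')]
      ring
    · have huS' : u ∉ S := fun h => hyu (huS.mp h)
      rw [if_neg (fun h : u ∈ A ∧ 0 < y u => hyu h.2),
        if_neg (fun h : u ∈ S ∧ v ∉ S => huS' h.1)]
      ring

lemma phi_key {V : Type*} [Fintype V] [DecidableEq V]
    (G H : V → V → ℝ) (β : ℝ) (hβ : 0 ≤ β)
    (hcap : ∀ S : Finset V, β * cap H S ≤ cap G S) (A : Finset V) :
    ∀ (n : ℕ) (y : V → ℝ), (∀ u, 0 ≤ y u) →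
      ((A.image y).filter (fun t => 0 < t)).card ≤ n →
      β * Phi H A y ≤ Phi G A y := by
  intro n
  induction n with
  | zero =>
    intro y hy hcard
    have hT : ((A.image y).filter (fun t => 0 < t)) = ∅ :=
      Finset.card_eq_zero.mp (Nat.le_zero.mp hcard)
    have hy0 : ∀ u ∈ A, y u = 0 := by
      intro u hu
      by_contra h
      have hpos : 0 < y u := lt_of_le_of_ne (hy u) (Ne.symm h)
      have : y u ∈ ((A.image y).filter (fun t => 0 < t)) :=
        mem_filter.mpr ⟨mem_image_of_mem y hu, hpos⟩
      simp [hT] at this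
    have hzero : ∀ w : V → V → ℝ, Phi w A y = 0 := by
      intro w
      apply Finset.sum_eq_zero; intro u hu
      apply Finset.sum_eq_zero; intro v _
      by_cases hvA : v ∈ A
      · simp [hvA, hy0 u hu, hy0 v hvA]
      · simp [hvA, hy0 u hu]
    rw [hzero G, hzero H]; simp
  | succ n ih =>
    intro y hy hcard
    set T := ((A.image y).filter (fun t => 0 < t)) with hT
    rcases T.eq_empty_or_nonempty with hTe | hTne
    · exact ih y hy (by rw [← hT, hTe]; simp)
    · set m := T.min' hTne with hmdef
      have hmT : m ∈ T := T.min'_mem hTne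
      have hmpos : 0 < m := (mem_filter.mp hmT).2
      have hmem : ∀ u ∈ A, 0 < y u → y u ∈ T := fun u hu hpos =>
        mem_filter.mpr ⟨mem_image_of_mem y hu, hpos⟩
      have hmle : ∀ u ∈ A, 0 < y u → m ≤ y u := fun u hu hpos =>
        T.min'_le _ (hmem u hu hpos)
      set y' : V → ℝ := fun u => if u ∈ A ∧ 0 < y u then y u - m else y u with hy'def
      have hy' : ∀ u, 0 ≤ y' u := by
        intro u
        change 0 ≤ if u ∈ A ∧ 0 < y u then y u - m else y u
        split_ifs with h
        · linarith [hmle u h.1 h.2]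
        · exact hy u
      have hsub : ((A.image y').filter (fun t => 0 < t)) ⊆
          (T.filter (fun t => m < t)).image (fun t => t - m) := by
        intro s hs
        obtain ⟨hs1, hs2⟩ := mem_filter.mp hs
        obtain ⟨u, hu, hus⟩ := mem_image.mp hs1
        rw [hy'def] at hus
        simp only at hus
        by_cases h : u ∈ A ∧ 0 < y u
        · rw [if_pos h] at hus
          refine mem_image.mpr ⟨y u, mem_filter.mpr ⟨hmem u h.1 h.2, ?_⟩, hus⟩
          linarith [hus ▸ hs2]
        · rw [if_neg h] at hus
          exfalso
          exact h ⟨hu, hus ▸ hs2⟩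
      have hcard' : ((A.image y').filter (fun t => 0 < t)).card ≤ n := by
        calc ((A.image y').filter (fun t => 0 < t)).card
            ≤ ((T.filter (fun t => m < t)).image (fun t => t - m)).card :=
              Finset.card_le_card hsub
          _ ≤ (T.filter (fun t => m < t)).card := Finset.card_image_le
          _ ≤ (T.erase m).card := Finset.card_le_card (by
              intro t ht
              obtain ⟨ht1, ht2⟩ := mem_filter.mp ht
              exact mem_erase.mpr ⟨ne_of_gt ht2, ht1⟩)
          _ = T.card - 1 := Finset.card_erase_of_mem hmT
          _ ≤ n := by omega
      have hstepG := phi_step G A y m hy hmle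
      have hstepH := phi_step H A y m hy hmle
      rw [hstepG, hstepH]
      have h1 : β * (m * cap H (A.filter (fun u => 0 < y u))) ≤
          m * cap G (A.filter (fun u => 0 < y u)) := by
        have := hcap (A.filter (fun u => 0 < y u))
        calc β * (m * cap H (A.filter (fun u => 0 < y u)))
            = m * (β * cap H (A.filter (fun u => 0 < y u))) := by ring
          _ ≤ m * cap G (A.filter (fun u => 0 < y u)) :=
              mul_le_mul_of_nonneg_left this (le_of_lt hmpos)
      have h2 := ih y' hy' hcard'
      rw [mul_add]
      exact add_le_add h1 h2

lemma phi_eq {V : Type*} [Fintype V] [DecidableEq V] (w : V → V → ℝ)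
    (hsymm : ∀ u v, w u v = w v u) (x : V → ℝ) :
    Phi w (Finset.univ.filter (fun u => x u ≤ 0)) (fun u => x u ^ 2) =
    (1 / 2) * (∑ u ∈ Finset.univ.filter (fun u => x u ≤ 0),
          ∑ v ∈ Finset.univ.filter (fun v => x v ≤ 0), w u v * |x u ^ 2 - x v ^ 2|)
        + ∑ u ∈ Finset.univ.filter (fun u => x u ≤ 0),
            ∑ v ∈ Finset.univ.filter (fun v => 0 < x v), w u v * x u ^ 2 := by
  set A := Finset.univ.filter (fun u => x u ≤ 0) with hA
  have hAc : Aᶜ = Finset.univ.filter (fun v => 0 < x v) := by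
    ext v; simp [hA, not_le]
  rw [Phi]
  have hsplit : ∀ u, (∑ v, w u v * (if v ∈ A then max (x u ^ 2 - x v ^ 2) 0 else x u ^ 2))
      = (∑ v ∈ A, w u v * max (x u ^ 2 - x v ^ 2) 0) + ∑ v ∈ Aᶜ, w u v * x u ^ 2 := by
    intro u
    rw [← Finset.sum_add_sum_compl A]
    congr 1
    · exact sum_congr rfl fun v hv => by rw [if_pos hv]
    · exact sum_congr rfl fun v hv => by rw [if_neg (mem_compl.mp hv)]
  simp only [hsplit]
  rw [Finset.sum_add_distrib, hAc]
  congr 1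
  have key : (∑ u ∈ A, ∑ v ∈ A, w u v * max (x u ^ 2 - x v ^ 2) 0)
      + (∑ u ∈ A, ∑ v ∈ A, w u v * max (x u ^ 2 - x v ^ 2) 0)
      = ∑ u ∈ A, ∑ v ∈ A, w u v * |x u ^ 2 - x v ^ 2| := by
    conv_lhs => rw [show (∑ u ∈ A, ∑ v ∈ A, w u v * max (x u ^ 2 - x v ^ 2) 0)
        + (∑ u ∈ A, ∑ v ∈ A, w u v * max (x u ^ 2 - x v ^ 2) 0)
      = (∑ u ∈ A, ∑ v ∈ A, w u v * max (x u ^ 2 - x v ^ 2) 0)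
        + (∑ u ∈ A, ∑ v ∈ A, w u v * max (x v ^ 2 - x u ^ 2) 0) by
        congr 1
        rw [Finset.sum_comm]
        exact sum_congr rfl fun u _ => sum_congr rfl fun v _ => by rw [hsymm u v]]
    rw [← Finset.sum_add_distrib]
    refine sum_congr rfl fun u _ => ?_
    rw [← Finset.sum_add_distrib]
    refine sum_congr rfl fun v _ => ?_
    rw [← mul_add]
    congr 1
    rcases le_total (x u ^ 2) (x v ^ 2) with h | h
    · rw [max_eq_right (by linarith), max_eq_left (by linarith), abs_of_nonpos (by linarith)]
      ring
    · rw [max_eq_left (by linarith), max_eq_right (by linarith), abs_of_nonneg (by linarith)]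
      ring
  linarith [key]

/-- The one-sided (on `V⁻`) sweep quantity for `G` dominates `β` times that for `H`
whenever `cap_G(S) ≥ β·cap_H(S)` for all `S`. -/
theorem oneSided_sweep_comparison {V : Type*} [Fintype V] [DecidableEq V] [Nonempty V]
    (G H : V → V → ℝ)
    (hGsymm : ∀ u v, G u v = G v u) (hGnn : ∀ u v, 0 ≤ G u v) (hGdiag : ∀ v, G v v = 0)
    (hHsymm : ∀ u v, H u v = H v u) (hHnn : ∀ u v, 0 ≤ H u v) (hHdiag : ∀ v, H v v = 0)
    (x : V → ℝ)
    (β : ℝ) (hβ : 0 ≤ β) (hcap : ∀ S : Finset V, β * cap H S ≤ cap G S) :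
    β * ((1 / 2) * (∑ u ∈ Finset.univ.filter (fun u => x u ≤ 0),
          ∑ v ∈ Finset.univ.filter (fun v => x v ≤ 0), H u v * |x u ^ 2 - x v ^ 2|)
        + ∑ u ∈ Finset.univ.filter (fun u => x u ≤ 0),
            ∑ v ∈ Finset.univ.filter (fun v => 0 < x v), H u v * x u ^ 2) ≤
      (1 / 2) * (∑ u ∈ Finset.univ.filter (fun u => x u ≤ 0),
          ∑ v ∈ Finset.univ.filter (fun v => x v ≤ 0), G u v * |x u ^ 2 - x v ^ 2|)
        + ∑ u ∈ Finset.univ.filter (fun u => x u ≤ 0),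
            ∑ v ∈ Finset.univ.filter (fun v => 0 < x v), G u v * x u ^ 2 := by
  rw [← phi_eq G hGsymm x, ← phi_eq H hHsymm x]
  exact phi_key G H β hβ hcap (Finset.univ.filter (fun u => x u ≤ 0)) _
    (fun u => x u ^ 2) (fun u => sq_nonneg _) le_rfl
end

section
/- Let G be a weighted graph on a finite nonempty vertex set V, let x : V → ℝ, and partition V into V⁻ = {u : x(u) ≤ 0} and V⁺ = {u : x(u) > 0}. Then Q_G(x) ≥ (1/2)·∑_{u,v in the same part} w_G(u,v)·(x(u) − x(v))² + ∑_{u ∈ V⁻, v ∈ V⁺} w_G(u,v)·(x(u)² + x(v)²). -/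
open Finset

/-- `xᵀ L_G x` is at least the same-part sum of `w(u,v)(x_u − x_v)²` plus the crossing sum
of `w(u,v)(x_u² + x_v²)`. -/
theorem quadForm_ge_split {V : Type*} [Fintype V] [Nonempty V]
    (G : V → V → ℝ)
    (hsymm : ∀ u v, G u v = G v u) (hnn : ∀ u v, 0 ≤ G u v) (hdiag : ∀ v, G v v = 0)
    (x : V → ℝ) :
    (1 / 2) * (∑ u ∈ Finset.univ.filter (fun u => x u ≤ 0),
          ∑ v ∈ Finset.univ.filter (fun v => x v ≤ 0), G u v * (x u - x v) ^ 2
        + ∑ u ∈ Finset.univ.filter (fun u => 0 < x u),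
          ∑ v ∈ Finset.univ.filter (fun v => 0 < x v), G u v * (x u - x v) ^ 2)
      + ∑ u ∈ Finset.univ.filter (fun u => x u ≤ 0),
          ∑ v ∈ Finset.univ.filter (fun v => 0 < x v), G u v * (x u ^ 2 + x v ^ 2) ≤
      quadForm G x := by
  classical
  set S := Finset.univ.filter (fun u : V => x u ≤ 0) with hS
  set T := Finset.univ.filter (fun u : V => 0 < x u) with hT
  have hsplit : ∀ f : V → ℝ, ∑ u, f u = ∑ u ∈ S, f u + ∑ u ∈ T, f u := by
    intro f
    rw [hS, hT, ← Finset.sum_filter_add_sum_filter_not Finset.univ (fun u => x u ≤ 0)]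
    congr 1
    apply Finset.sum_congr _ (fun _ _ => rfl)
    ext u; simp [not_le]
  have key : quadForm G x = (1/2) * (∑ u ∈ S, ∑ v ∈ S, G u v * (x u - x v)^2
      + ∑ u ∈ T, ∑ v ∈ T, G u v * (x u - x v)^2)
      + ∑ u ∈ S, ∑ v ∈ T, G u v * (x u - x v)^2 := by
    unfold quadForm
    rw [hsplit (fun u => ∑ v, G u v * (x u - x v)^2)]
    have h1 : ∀ u, ∑ v, G u v * (x u - x v)^2
        = ∑ v ∈ S, G u v * (x u - x v)^2 + ∑ v ∈ T, G u v * (x u - x v)^2 :=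
      fun u => hsplit _
    simp only [h1, Finset.sum_add_distrib]
    have h2 : ∑ u ∈ T, ∑ v ∈ S, G u v * (x u - x v)^2
        = ∑ u ∈ S, ∑ v ∈ T, G u v * (x u - x v)^2 := by
      rw [Finset.sum_comm]
      exact Finset.sum_congr rfl fun u _ => Finset.sum_congr rfl fun v _ => by
        rw [hsymm]; ring
    rw [h2]; ring
  rw [key]
  gcongr with u hu v hv
  all_goals (simp only [hS, hT, Finset.mem_filter] at hu hv; nlinarith [hnn u v, mul_nonneg (hnn u v) (mul_nonneg (neg_nonneg.2 hu.2) hv.2.le)])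
end

section
/- Let G be a weighted graph on a finite nonempty vertex set V, let x : V → ℝ, and partition V into V⁻ = {u : x(u) ≤ 0} and V⁺ = {u : x(u) > 0}. Then (1/2)·∑_{u,v in the same part} w_G(u,v)·(x(u) + x(v))² + ∑_{u ∈ V⁻, v ∈ V⁺} w_G(u,v)·(x(u)² + x(v)²) ≤ 2·∑_{v ∈ V} d_G(v)·x(v)². (That is, this quantity is at most 2·x^T D x where D is the diagonal degree matrix of G.) -/
open Finset

/-- The same-part sum of `w(u,v)(x_u + x_v)²` plus the crossing sum of `w(u,v)(x_u² + x_v²)`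
is at most `2·xᵀDx`. -/
theorem split_le_two_degSum {V : Type*} [Fintype V] [Nonempty V]
    (G : V → V → ℝ)
    (hsymm : ∀ u v, G u v = G v u) (hnn : ∀ u v, 0 ≤ G u v) (hdiag : ∀ v, G v v = 0)
    (x : V → ℝ) :
    (1 / 2) * (∑ u ∈ Finset.univ.filter (fun u => x u ≤ 0),
          ∑ v ∈ Finset.univ.filter (fun v => x v ≤ 0), G u v * (x u + x v) ^ 2
        + ∑ u ∈ Finset.univ.filter (fun u => 0 < x u),
          ∑ v ∈ Finset.univ.filter (fun v => 0 < x v), G u v * (x u + x v) ^ 2)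
      + ∑ u ∈ Finset.univ.filter (fun u => x u ≤ 0),
          ∑ v ∈ Finset.univ.filter (fun v => 0 < x v), G u v * (x u ^ 2 + x v ^ 2) ≤
      2 * ∑ v, deg G v * x v ^ 2 := by
  classical
  set f : V → V → ℝ := fun u v => G u v * (x u ^ 2 + x v ^ 2) with hf
  have hfnn : ∀ u v, 0 ≤ f u v := fun u v =>
    mul_nonneg (hnn u v) (by positivity)
  have hhalf : ∀ u v, (1 / 2) * (G u v * (x u + x v) ^ 2) ≤ f u v := by
    intro u v
    have h1 : (x u + x v) ^ 2 ≤ 2 * (x u ^ 2 + x v ^ 2) := by nlinarith [sq_nonneg (x u - x v)]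
    have := mul_le_mul_of_nonneg_left h1 (hnn u v)
    simp only [hf]
    nlinarith
  have htotal : ∑ u, ∑ v, f u v = 2 * ∑ v, deg G v * x v ^ 2 := by
    have h1 : ∑ u, ∑ v, f u v
        = ∑ u, ∑ v, G u v * x u ^ 2 + ∑ u, ∑ v, G u v * x v ^ 2 := by
      rw [← Finset.sum_add_distrib]
      refine Finset.sum_congr rfl fun u _ => ?_
      rw [← Finset.sum_add_distrib]
      refine Finset.sum_congr rfl fun v _ => ?_
      simp [hf]; ring
    have h2 : ∑ u, ∑ v, G u v * x u ^ 2 = ∑ v, deg G v * x v ^ 2 := by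
      refine Finset.sum_congr rfl fun u _ => ?_
      rw [← Finset.sum_mul, deg]
    have h3 : ∑ u, ∑ v, G u v * x v ^ 2 = ∑ v, deg G v * x v ^ 2 := by
      rw [Finset.sum_comm]
      refine Finset.sum_congr rfl fun v _ => ?_
      rw [← Finset.sum_mul, deg]
      congr 1
      exact Finset.sum_congr rfl fun u _ => hsymm u v
    rw [h1, h2, h3]; ring
  set A : Finset V := Finset.univ.filter (fun u => x u ≤ 0) with hA
  set B : Finset V := Finset.univ.filter (fun u => 0 < x u) with hB
  have hsplit : ∀ g : V → ℝ, ∑ v, g v = ∑ v ∈ A, g v + ∑ v ∈ B, g v := by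
    intro g
    rw [hA, hB]
    rw [← Finset.sum_filter_add_sum_filter_not Finset.univ (fun u => x u ≤ 0) g]
    congr 1
    apply Finset.sum_congr _ fun _ _ => rfl
    ext u; simp [not_le]
  have hdecomp : ∑ u, ∑ v, f u v
      = (∑ u ∈ A, ∑ v ∈ A, f u v + ∑ u ∈ B, ∑ v ∈ B, f u v)
        + ∑ u ∈ A, ∑ v ∈ B, f u v + ∑ u ∈ B, ∑ v ∈ A, f u v := by
    rw [hsplit (fun u => ∑ v, f u v)]
    have e1 : ∑ u ∈ A, ∑ v, f u v = ∑ u ∈ A, (∑ v ∈ A, f u v + ∑ v ∈ B, f u v) :=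
      Finset.sum_congr rfl fun u _ => hsplit (f u)
    have e2 : ∑ u ∈ B, ∑ v, f u v = ∑ u ∈ B, (∑ v ∈ A, f u v + ∑ v ∈ B, f u v) :=
      Finset.sum_congr rfl fun u _ => hsplit (f u)
    rw [e1, e2, Finset.sum_add_distrib, Finset.sum_add_distrib]
    ring
  rw [← htotal, hdecomp]
  have hAA : (1 / 2) * (∑ u ∈ A, ∑ v ∈ A, G u v * (x u + x v) ^ 2)
      ≤ ∑ u ∈ A, ∑ v ∈ A, f u v := by
    rw [Finset.mul_sum]
    refine Finset.sum_le_sum fun u _ => ?_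
    rw [Finset.mul_sum]
    exact Finset.sum_le_sum fun v _ => hhalf u v
  have hBB : (1 / 2) * (∑ u ∈ B, ∑ v ∈ B, G u v * (x u + x v) ^ 2)
      ≤ ∑ u ∈ B, ∑ v ∈ B, f u v := by
    rw [Finset.mul_sum]
    refine Finset.sum_le_sum fun u _ => ?_
    rw [Finset.mul_sum]
    exact Finset.sum_le_sum fun v _ => hhalf u v
  have hBA : 0 ≤ ∑ u ∈ B, ∑ v ∈ A, f u v :=
    Finset.sum_nonneg fun u _ => Finset.sum_nonneg fun v _ => hfnn u v
  have hmain : (1 / 2) * (∑ u ∈ A, ∑ v ∈ A, G u v * (x u + x v) ^ 2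
        + ∑ u ∈ B, ∑ v ∈ B, G u v * (x u + x v) ^ 2)
      ≤ ∑ u ∈ A, ∑ v ∈ A, f u v + ∑ u ∈ B, ∑ v ∈ B, f u v := by
    rw [mul_add]; exact add_le_add hAA hBB
  linarith
end
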